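/- Corollary (of Theorems 3.7 and 4.2): Suppose in addition that G is locally finite (every vertex has only finitely many neighbors). Then for every vertex x₀ ∈ V there exists a two-way infinite family w : ℤ → (ℕ → V) of sequences such that each w(i) is not limitedly distant from any constant sequence, for all i < j and every m ∈ ℕ one has {n : d(w(i)(n), x₀) + m ≤ d(w(j)(n), x₀)} ∈ ℱ, and for i ≠ j the sequences w(i) and w(j) are not limitedly distant. In other words, whenever G is locally finite, the enlargement *G possesses a two-way infinite sequence of distinct galaxies totally ordered according to their closeness to the principal galaxy. -/

import Mathlib

/-!
Balls of a connected locally finite graph are finite, so in an infinite such graph every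
distance `m` from `x₀` is attained by some vertex `φ m`. Put `wᵢ(n) = φ (n (n + i))`: for
`i < j` the distances of `wᵢ(n)` and `wⱼ(n)` from `x₀` differ by at least `n` for large `n`,
and a free ultrafilter on `ℕ` contains every cofinite set. By the triangle inequality, a
difference of distances from `x₀` that is eventually larger than every bound keeps two
sequences from being limitedly distant; the constant sequences are handled by comparing
with `wᵢ₋₁`.
-/

open Filter

theorem Ultrafilter.le_cofinite_of_forall_ne_pure {α : Type*} {ℱ : Ultrafilter α}
    (hF : ∀ a, ℱ ≠ pure a) : (ℱ : Filter α) ≤ cofinite :=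
  ℱ.le_cofinite_or_eq_pure.resolve_right fun ⟨a, ha⟩ => hF a ha

theorem exists_int_indexed_eventually_add_le :
    ∃ D : ℤ → ℕ → ℕ, ∀ i j, i < j → ∀ m, ∀ᶠ n in atTop, D i n + m ≤ D j n := by
  refine ⟨fun i n => ((n : ℤ) * (n + i)).toNat, fun i j hij m =>
    eventually_atTop.2 ⟨i.natAbs + m, fun n hn => ?_⟩⟩
  dsimp only
  have hi : (0 : ℤ) ≤ n + i := by omega
  have hgap : (n : ℤ) * (n + i) + n ≤ n * (n + j) := by nlinarith
  have hnonneg : (0 : ℤ) ≤ n * (n + i) := by positivity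
  omega

namespace SimpleGraph

variable {V : Type*} {G : SimpleGraph V}

theorem Connected.exists_dist_eq_of_le (hG : G.Connected) {a b : V} {k : ℕ}
    (hk : k ≤ G.dist a b) : ∃ v, G.dist a v = k := by
  obtain ⟨p, hp⟩ := hG.exists_walk_length_eq_dist a b
  refine ⟨p.getVert k, le_antisymm ?_ ?_⟩
  · simpa [hp ▸ hk] using dist_le (p.take k)
  · have h₁ : G.dist (p.getVert k) b ≤ p.length - k := by simpa using dist_le (p.drop k)
    have h₂ := hG.dist_triangle (u := a) (v := p.getVert k) (w := b)
    omega

theorem Connected.finite_setOf_dist_le (hG : G.Connected)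
    (hlf : ∀ v, (G.neighborSet v).Finite) (x : V) (n : ℕ) :
    {v | G.dist v x ≤ n}.Finite := by
  induction n with
  | zero =>
    exact (Set.finite_singleton x).subset fun v hv => hG.dist_eq_zero_iff.mp (Nat.le_zero.mp hv)
  | succ n ih =>
    refine ((ih.biUnion fun v _ => hlf v).insert x).subset fun u hu => ?_
    obtain ⟨p, hp⟩ := hG.exists_walk_length_eq_dist u x
    cases p with
    | nil => exact Set.mem_insert _ _
    | cons h q =>
      refine Set.mem_insert_of_mem _ (Set.mem_biUnion ?_ h.symm)
      have := dist_le q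
      simp only [Set.mem_ofPred_eq, Walk.length_cons] at hp hu ⊢
      omega

theorem Connected.exists_dist_eq [Infinite V] (hG : G.Connected)
    (hlf : ∀ v, (G.neighborSet v).Finite) (x : V) (m : ℕ) : ∃ v, G.dist v x = m := by
  obtain ⟨u, hu⟩ := (hG.finite_setOf_dist_le hlf x m).infinite_compl.nonempty
  obtain ⟨v, hv⟩ := hG.exists_dist_eq_of_le (a := x) (b := u) (k := m)
    (by rw [dist_comm]; simp only [Set.mem_compl_iff, Set.mem_ofPred_eq] at hu; omega)
  exact ⟨v, dist_comm.trans hv⟩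

variable {ι : Type*}

def LimitedlyDistant (G : SimpleGraph V) (l : Filter ι) (u v : ι → V) : Prop :=
  ∃ k : ℕ, ∀ᶠ n in l, G.dist (u n) (v n) ≤ k

theorem LimitedlyDistant.symm {l : Filter ι} {u v : ι → V} (h : G.LimitedlyDistant l u v) :
    G.LimitedlyDistant l v u := by
  simpa only [LimitedlyDistant, dist_comm] using h

theorem not_limitedlyDistant_of_forall_eventually_add_le (hG : G.Connected) {l : Filter ι}
    [l.NeBot] {u v : ι → V} {x : V} (h : ∀ m, ∀ᶠ n in l, G.dist (u n) x + m ≤ G.dist (v n) x) :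
    ¬ G.LimitedlyDistant l v u := fun ⟨k, hk⟩ =>
  let ⟨n, hfar, hnear⟩ := ((h (k + 1)).and hk).exists
  have := hG.dist_triangle (u := v n) (v := u n) (w := x)
  by omega

end SimpleGraph

open SimpleGraph

/-- Corollary of Theorems 3.7 and 4.2: if the connected infinite graph `G` is
locally finite, then the enlargement `*G` possesses a two-way infinite
sequence of distinct galaxies totally ordered according to their closeness to
the principal galaxy. -/
theorem locally_finite_two_way_infinite_galaxies {V : Type*} [Infinite V]
    (G : SimpleGraph V) (hG : G.Connected)
    (hlf : ∀ v : V, (G.neighborSet v).Finite)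
    (ℱ : Ultrafilter ℕ) (hF : ∀ a : ℕ, ℱ ≠ pure a) :
    ∀ x₀ : V, ∃ w : ℤ → (ℕ → V),
      (∀ i : ℤ, ∀ c : V, ∀ k : ℕ, {n : ℕ | G.dist (w i n) c ≤ k} ∉ ℱ) ∧
      (∀ i j : ℤ, i < j → ∀ m : ℕ,
        {n : ℕ | G.dist (w i n) x₀ + m ≤ G.dist (w j n) x₀} ∈ ℱ) ∧
      (∀ i j : ℤ, i ≠ j →
        ¬ ∃ k : ℕ, {n : ℕ | G.dist (w i n) (w j n) ≤ k} ∈ ℱ) := by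
  intro x₀
  have hℱ : (ℱ : Filter ℕ) ≤ atTop :=
    Nat.cofinite_eq_atTop ▸ Ultrafilter.le_cofinite_of_forall_ne_pure hF
  choose φ hφ using hG.exists_dist_eq hlf x₀
  obtain ⟨D, hD⟩ := exists_int_indexed_eventually_add_le
  have farther : ∀ i j, i < j → ∀ m, ∀ᶠ n in (ℱ : Filter ℕ),
      G.dist (φ (D i n)) x₀ + m ≤ G.dist (φ (D j n)) x₀ := fun i j hij m => by
    simpa only [hφ] using (hD i j hij m).filter_mono hℱ
  refine ⟨fun i n => φ (D i n), fun i c k hk => ?_, farther, fun i j hij ⟨k, hk⟩ => ?_⟩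
  · refine not_limitedlyDistant_of_forall_eventually_add_le hG (u := fun _ => c) (x := x₀)
      (fun m => ?_) ⟨k, hk⟩
    filter_upwards [farther (i - 1) i (by omega) (G.dist c x₀ + m)] with n hn
    omega
  · rcases hij.lt_or_gt with h | h
    · exact not_limitedlyDistant_of_forall_eventually_add_le hG (farther i j h)
        (LimitedlyDistant.symm ⟨k, hk⟩)
    · exact not_limitedlyDistant_of_forall_eventually_add_le hG (farther j i h) ⟨k, hk⟩
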